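/- Let H be a self-adjoint operator on a separable complex Hilbert space, α ∈ (0,1], E > inf σ(|H|), and let ρ(t) = e^{-itH} ρ₀ e^{itH} solve the von Neumann equation with initial state ρ₀ (a positive trace-one operator) satisfying the regularized-trace energy constraint tr(|H|^{2α} ρ₀) ≤ E^{2α}. If at time t the state ρ(t) is at Bures angle θ := arccos(‖√ρ(0) √ρ(t)‖₁) ∈ [0,π/2] from ρ₀, then t ≥ ((1 − cos θ)/g_α)^{1/α} · (1/E). -/

import Mathlib

open scoped ENNReal NNReal
open MeasureTheory

noncomputable section

local notation "⟪" x ", " y "⟫" => @inner ℂ _ _ x y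

/-- `ζ_α := (2α/(1-α))^{1-α} + 2(2α/(1-α))^{-α}` for `α ∈ (0,1)`, and `ζ₁ := 1`. -/
def zetaC (α : ℝ) : ℝ :=
  if α = 1 then 1 else (2 * α / (1 - α)) ^ (1 - α) + 2 * (2 * α / (1 - α)) ^ (-α)

/-- `g_α := ζ_α (1-α)^{(1-α)/2} α^{α/2}`. -/
def gC (α : ℝ) : ℝ := zetaC α * (1 - α) ^ ((1 - α) / 2) * α ^ (α / 2)

variable {ℋ : Type*} [NormedAddCommGroup ℋ] [InnerProductSpace ℂ ℋ]

/-- Trace norm `‖A‖₁ ∈ [0,∞]` via its variational characterization over finite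
orthonormal families. -/
def trNorm (A : ℋ →L[ℂ] ℋ) : ℝ≥0∞ :=
  ⨆ (n : ℕ) (e : Fin n → ℋ) (f : Fin n → ℋ) (_ : Orthonormal ℂ e) (_ : Orthonormal ℂ f),
    ∑ i, ENNReal.ofReal ‖⟪e i, A (f i)⟫‖

/-- Trace of a positive operator. -/
def opTr (A : ℋ →L[ℂ] ℋ) : ℝ≥0∞ :=
  ⨆ (n : ℕ) (e : Fin n → ℋ) (_ : Orthonormal ℂ e),
    ENNReal.ofReal (∑ i, (⟪A (e i), e i⟫).re)

/-- Positivity of a bounded operator. -/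
def IsPosOp (A : ℋ →L[ℂ] ℋ) : Prop :=
  (∀ x y : ℋ, ⟪A x, y⟫ = ⟪x, A y⟫) ∧ ∀ x : ℋ, 0 ≤ (⟪A x, x⟫).re

/-- A state: positive operator of unit trace. -/
def IsStateOp (A : ℋ →L[ℂ] ℋ) : Prop := IsPosOp A ∧ opTr A = 1

/-- The `p`-th absolute spectral moment `∫ |s|^p dμ_x(s)`; for the spectral measure family of
a self-adjoint operator `H` this equals `‖|H|^{p/2} x‖²` (possibly `∞`). -/
def specMoment (μ : ℋ → Measure ℝ) (p : ℝ) (x : ℋ) : ℝ≥0∞ :=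
  ∫⁻ s, ENNReal.ofReal (|s| ^ p) ∂(μ x)

/-- Regularized-trace energy constraint `tr(S^{p2} ρ) ≤ B` via an eigen-decomposition of `ρ`. -/
def stateEnergyLE (μ : ℋ → Measure ℝ) (p2 : ℝ) (ρ : ℋ →L[ℂ] ℋ) (B : ℝ≥0∞) : Prop :=
  ∃ (p : ℕ → ℝ≥0) (φ : ℕ → ℋ), Orthonormal ℂ φ ∧
    (∀ x : ℋ, ρ x = ∑' i, (p i : ℂ) • (⟪φ i, x⟫ • φ i)) ∧
    ∑' i, (p i : ℝ≥0∞) * specMoment μ p2 (φ i) ≤ B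

/-!
Diagonalise `ρ₀ = ∑ pᵢ |φᵢ⟩⟨φᵢ|`. The vectors `eᵢ = pᵢ^{-1/2} √ρ₀ φᵢ` and `T_t eᵢ` form
orthonormal families on which `√ρ₀ T_t √ρ₀ T_{-t}` has diagonal entries `pᵢ ⟪φᵢ, T_t φᵢ⟫`, so the
fidelity `F` is at least `∑ pᵢ |⟪φᵢ, T_t φᵢ⟫|`, while `F ≤ tr ρ₀ = 1` by AM-GM. As `|z| ≥ Re z`,
`1 - F ≤ ∑ pᵢ (1 - Re ⟪φᵢ, T_t φᵢ⟫) = ∫ (1 - cos ts) dν(s)` for the mixture `ν = ∑ pᵢ μ_{φᵢ}` of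
spectral measures. The elementary bound `1 - cos x ≤ 2^{1-α} |x|^α` and Cauchy-Schwarz give
`∫ (1 - cos ts) dν ≤ 2^{1-α} t^α (∫ |s|^{2α} dν)^{1/2} ≤ 2^{1-α} (tE)^α`, and `2^{1-α} ≤ g_α`.
-/

lemma one_sub_cos_le_two_rpow_mul_abs_rpow {α : ℝ} (h0 : 0 ≤ α) (h2 : α ≤ 2) (x : ℝ) :
    1 - Real.cos x ≤ 2 ^ (1 - α) * |x| ^ α := by
  rcases le_or_gt |x| 2 with hx | hx
  · rcases (abs_nonneg x).eq_or_lt with hx0 | hx0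
    · simp only [abs_eq_zero.mp hx0.symm, Real.cos_zero, sub_self, abs_zero]; positivity
    calc 1 - Real.cos x ≤ |x| ^ (2 : ℝ) / 2 := by
          rw [Real.rpow_two, sq_abs]; linarith [Real.one_sub_sq_div_two_le_cos (x := x)]
      _ = |x| ^ (2 - α) * |x| ^ α / 2 := by rw [← Real.rpow_add hx0, sub_add_cancel]
      _ ≤ 2 ^ (2 - α) * |x| ^ α / 2 := by gcongr
      _ = 2 ^ (1 - α) * |x| ^ α := by
          rw [show (2 : ℝ) - α = (1 - α) + 1 by ring, Real.rpow_add_one two_ne_zero]; ring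
  · calc 1 - Real.cos x ≤ 2 ^ (1 - α) * 2 ^ α := by
          rw [← Real.rpow_add two_pos, sub_add_cancel, Real.rpow_one]
          linarith [Real.neg_one_le_cos x]
      _ ≤ 2 ^ (1 - α) * |x| ^ α := by gcongr

lemma two_rpow_one_sub_le_gC {α : ℝ} (h0 : 0 < α) (h1 : α ≤ 1) : (2 : ℝ) ^ (1 - α) ≤ gC α := by
  rcases h1.eq_or_lt with rfl | h1
  · simp [gC, zetaC]
  have h1' : 0 < 1 - α := by linarith
  have hc : 0 < 2 * α / (1 - α) := by positivity
  have hlα : Real.log α ≤ 0 := Real.log_nonpos h0.le h1.le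
  have hl1α : Real.log (1 - α) ≤ 0 := Real.log_nonpos h1'.le (by linarith)
  have hlc : Real.log (2 * α / (1 - α)) = Real.log 2 + Real.log α - Real.log (1 - α) := by
    rw [Real.log_div (by positivity) (by positivity), Real.log_mul two_ne_zero h0.ne']
  set w := (1 - α) ^ ((1 - α) / 2) * α ^ (α / 2)
  -- each of the two summands of `ζ_α` contributes its share: `α 2^(1-α)` and `(1-α) 2^(1-α)`
  have hA : α * 2 ^ (1 - α) ≤ (2 * α / (1 - α)) ^ (1 - α) * w := by
    rw [← Real.log_le_log_iff (by positivity) (by positivity), Real.log_mul (by positivity)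
      (by positivity), Real.log_mul (by positivity) (by positivity), Real.log_mul (by positivity)
      (by positivity), Real.log_rpow h0, Real.log_rpow hc, Real.log_rpow h1', Real.log_rpow two_pos,
      hlc]
    nlinarith [mul_nonneg h0.le (neg_nonneg.2 hlα), mul_nonneg h1'.le (neg_nonneg.2 hl1α)]
  have hB : (1 - α) * 2 ^ (1 - α) ≤ 2 * (2 * α / (1 - α)) ^ (-α) * w := by
    rw [← Real.log_le_log_iff (by positivity) (by positivity), Real.log_mul (by positivity)
      (by positivity), Real.log_mul (by positivity) (by positivity), Real.log_mul two_ne_zero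
      (by positivity), Real.log_mul (by positivity) (by positivity), Real.log_rpow hc,
      Real.log_rpow h1', Real.log_rpow two_pos, Real.log_rpow h0, hlc]
    nlinarith [mul_nonneg h0.le (neg_nonneg.2 hlα), mul_nonneg h1'.le (neg_nonneg.2 hl1α)]
  have hgC : gC α = (2 * α / (1 - α)) ^ (1 - α) * w + 2 * (2 * α / (1 - α)) ^ (-α) * w := by
    rw [gC, zetaC, if_neg h1.ne]; ring
  linarith

lemma rpow_one_div_le_of_le_mul_rpow {a g y α : ℝ} (ha : 0 ≤ a) (hg : 0 < g) (hy : 0 ≤ y)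
    (hα : 0 < α) (h : a ≤ g * y ^ α) : (a / g) ^ (1 / α) ≤ y := by
  rw [one_div, Real.rpow_inv_le_iff_of_pos (by positivity) hy hα, div_le_iff₀' hg]
  exact h

lemma one_sub_cos_arccos_toReal_le {F : ℝ≥0∞} (hF : F ≤ 1) {K : ℝ} (hK : 0 ≤ K)
    (h : 1 ≤ F + ENNReal.ofReal K) : 1 - Real.cos (Real.arccos F.toReal) ≤ K := by
  have hFtop : F ≠ ⊤ := ne_top_of_le_ne_top ENNReal.one_ne_top hF
  have hF' : F.toReal ≤ 1 := ENNReal.toReal_le_of_le_ofReal zero_le_one (by simpa using hF)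
  have := ENNReal.toReal_mono (ENNReal.add_ne_top.2 ⟨hFtop, ENNReal.ofReal_ne_top⟩) h
  rw [ENNReal.toReal_add hFtop ENNReal.ofReal_ne_top, ENNReal.toReal_ofReal hK,
    ENNReal.toReal_one] at this
  rw [Real.cos_arccos (by linarith [F.toReal_nonneg]) hF']
  linarith

lemma ofReal_one_sub_re_integral_cexp (ν : Measure ℝ) [IsProbabilityMeasure ν] (t : ℝ) :
    ENNReal.ofReal (1 - (∫ s, Complex.exp (-(Complex.I * t * s)) ∂ν).re) =
      ∫⁻ s, ENNReal.ofReal (1 - Real.cos (t * s)) ∂ν := by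
  have hexp : Integrable (fun s : ℝ => Complex.exp (-(Complex.I * t * s))) ν :=
    (integrable_const (1 : ℝ)).mono' (by fun_prop) (.of_forall fun s => by
      rw [Complex.norm_exp]; simp)
  have hre : ∀ s : ℝ, RCLike.re (Complex.exp (-(Complex.I * t * s))) = Real.cos (t * s) := by
    intro s
    rw [show -(Complex.I * t * s) = ((-(t * s) : ℝ) : ℂ) * Complex.I by push_cast; ring,
      RCLike.re_to_complex, Complex.exp_ofReal_mul_I_re, Real.cos_neg]
  have hcos : Integrable (fun s : ℝ => Real.cos (t * s)) ν := by
    simpa only [hre] using hexp.re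
  have hsub : 1 - ∫ s, Real.cos (t * s) ∂ν = ∫ s, (1 - Real.cos (t * s)) ∂ν := by
    rw [integral_sub (integrable_const 1) hcos, integral_const, probReal_univ, one_smul]
  rw [← RCLike.re_to_complex, ← integral_re hexp, funext hre, hsub]
  exact ofReal_integral_eq_lintegral_ofReal ((integrable_const 1).sub hcos)
    (.of_forall fun s => sub_nonneg.2 (Real.cos_le_one _))

lemma lintegral_le_lintegral_sq_rpow_half {X : Type*} [MeasurableSpace X] {ν : Measure X}
    (hν : ν Set.univ ≤ 1) {f : X → ℝ≥0∞} (hf : AEMeasurable f ν) :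
    ∫⁻ x, f x ∂ν ≤ (∫⁻ x, f x ^ (2 : ℝ) ∂ν) ^ (1 / 2 : ℝ) := by
  have h := ENNReal.lintegral_mul_le_Lp_mul_Lq ν Real.HolderConjugate.two_two hf
    (aemeasurable_const (b := (1 : ℝ≥0∞)))
  simp only [Pi.mul_apply, mul_one, ENNReal.one_rpow, lintegral_const, one_mul] at h
  calc ∫⁻ x, f x ∂ν ≤ (∫⁻ x, f x ^ (2 : ℝ) ∂ν) ^ (1 / 2 : ℝ) * ν Set.univ ^ (1 / 2 : ℝ) := h
    _ ≤ (∫⁻ x, f x ^ (2 : ℝ) ∂ν) ^ (1 / 2 : ℝ) * 1 ^ (1 / 2 : ℝ) := by gcongr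
    _ = (∫⁻ x, f x ^ (2 : ℝ) ∂ν) ^ (1 / 2 : ℝ) := by rw [ENNReal.one_rpow, mul_one]

lemma pos_of_measure_setOf_abs_lt_ne_zero {ν : Measure ℝ} {E : ℝ}
    (h : ν {s : ℝ | |s| < E} ≠ 0) : 0 < E :=
  let ⟨s, hs⟩ := nonempty_of_measure_ne_zero h
  (abs_nonneg s).trans_lt hs

lemma tsum_mul_ofReal_one_sub_re_integral_cexp_le {ι : Type*} (ν : ι → Measure ℝ)
    [∀ i, IsProbabilityMeasure (ν i)] (p : ι → ℝ≥0) (hp : ∑' i, (p i : ℝ≥0∞) ≤ 1)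
    {α : ℝ} (h0 : 0 ≤ α) (h2 : α ≤ 2) {E : ℝ} (hE₀ : 0 ≤ E)
    (hE : ∑' i, (p i : ℝ≥0∞) * ∫⁻ s, ENNReal.ofReal (|s| ^ (2 * α)) ∂ν i ≤
      ENNReal.ofReal (E ^ (2 * α)))
    {t : ℝ} (ht : 0 ≤ t) :
    ∑' i, (p i : ℝ≥0∞) * ENNReal.ofReal (1 - (∫ s, Complex.exp (-(Complex.I * t * s)) ∂ν i).re) ≤
      ENNReal.ofReal (2 ^ (1 - α) * (t * E) ^ α) := by
  -- everything is an integral against the mixture `∑ pᵢ νᵢ`, a sub-probability measure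
  set m := Measure.sum fun i => (p i : ℝ≥0∞) • ν i
  have hmix : ∀ f : ℝ → ℝ≥0∞, ∫⁻ s, f s ∂m = ∑' i, (p i : ℝ≥0∞) * ∫⁻ s, f s ∂ν i := fun f => by
    simp only [m, lintegral_sum_measure, lintegral_smul_measure, smul_eq_mul]
  have hm : m Set.univ ≤ 1 := by
    rw [← lintegral_one, hmix]
    simpa only [lintegral_one, measure_univ, mul_one] using hp
  have hpt : ∀ s : ℝ, ENNReal.ofReal (1 - Real.cos (t * s)) ≤
      ENNReal.ofReal (2 ^ (1 - α) * t ^ α) * ENNReal.ofReal (|s| ^ α) := fun s => by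
    rw [← ENNReal.ofReal_mul (by positivity), mul_assoc, ← Real.mul_rpow ht (abs_nonneg s),
      ← abs_of_nonneg ht, ← abs_mul, abs_of_nonneg ht]
    exact ENNReal.ofReal_le_ofReal (one_sub_cos_le_two_rpow_mul_abs_rpow h0 h2 _)
  have hsq : ∀ s : ℝ, ENNReal.ofReal (|s| ^ α) ^ (2 : ℝ) = ENNReal.ofReal (|s| ^ (2 * α)) :=
    fun s => by
      rw [ENNReal.ofReal_rpow_of_nonneg (by positivity) zero_le_two, ← Real.rpow_mul (abs_nonneg s),
        mul_comm]
  calc ∑' i, (p i : ℝ≥0∞) * ENNReal.ofReal (1 - (∫ s, Complex.exp (-(Complex.I * t * s)) ∂ν i).re)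
      = ∫⁻ s, ENNReal.ofReal (1 - Real.cos (t * s)) ∂m := by
        simp only [hmix, ofReal_one_sub_re_integral_cexp]
    _ ≤ ∫⁻ s, ENNReal.ofReal (2 ^ (1 - α) * t ^ α) * ENNReal.ofReal (|s| ^ α) ∂m :=
        lintegral_mono hpt
    _ = ENNReal.ofReal (2 ^ (1 - α) * t ^ α) * ∫⁻ s, ENNReal.ofReal (|s| ^ α) ∂m :=
        lintegral_const_mul' _ _ ENNReal.ofReal_ne_top
    _ ≤ ENNReal.ofReal (2 ^ (1 - α) * t ^ α) *
        (∫⁻ s, ENNReal.ofReal (|s| ^ α) ^ (2 : ℝ) ∂m) ^ (1 / 2 : ℝ) := by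
        gcongr
        exact lintegral_le_lintegral_sq_rpow_half hm (by fun_prop)
    _ ≤ ENNReal.ofReal (2 ^ (1 - α) * t ^ α) * ENNReal.ofReal (E ^ (2 * α)) ^ (1 / 2 : ℝ) := by
        simp only [hsq, hmix]
        gcongr
    _ = ENNReal.ofReal (2 ^ (1 - α) * (t * E) ^ α) := by
        rw [ENNReal.ofReal_rpow_of_nonneg (by positivity) (by norm_num),
          ← ENNReal.ofReal_mul (by positivity), ← Real.rpow_mul hE₀, Real.mul_rpow ht hE₀,
          mul_assoc, mul_one_div, mul_div_cancel_left₀ _ two_ne_zero]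

lemma sum_ofReal_norm_inner_le_trNorm {ι : Type*} [Fintype ι] (A : ℋ →L[ℂ] ℋ) {e f : ι → ℋ}
    (he : Orthonormal ℂ e) (hf : Orthonormal ℂ f) :
    ∑ i, ENNReal.ofReal ‖⟪e i, A (f i)⟫‖ ≤ trNorm A := by
  let σ := (Fintype.equivFin ι).symm
  rw [← σ.sum_comp]
  exact le_iSup_of_le _ <| le_iSup_of_le (e ∘ σ) <| le_iSup_of_le (f ∘ σ) <|
    le_iSup_of_le (he.comp σ σ.injective) <| le_iSup_of_le (hf.comp σ σ.injective) le_rfl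

lemma ofReal_sum_re_inner_le_opTr {ι : Type*} [Fintype ι] (A : ℋ →L[ℂ] ℋ) {e : ι → ℋ}
    (he : Orthonormal ℂ e) :
    ENNReal.ofReal (∑ i, (⟪A (e i), e i⟫).re) ≤ opTr A := by
  let σ := (Fintype.equivFin ι).symm
  rw [← σ.sum_comp]
  exact le_iSup_of_le _ <| le_iSup_of_le (e ∘ σ) <| le_iSup_of_le (he.comp σ σ.injective) le_rfl

lemma ofReal_sum_norm_sq_le_opTr_comp_self {ι : Type*} [Fintype ι] {R : ℋ →L[ℂ] ℋ}
    (hR : ∀ x y : ℋ, ⟪R x, y⟫ = ⟪x, R y⟫) {e : ι → ℋ} (he : Orthonormal ℂ e) :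
    ENNReal.ofReal (∑ i, ‖R (e i)‖ ^ 2) ≤ opTr (R.comp R) := by
  convert ofReal_sum_re_inner_le_opTr (R.comp R) he using 3 with i
  rw [ContinuousLinearMap.comp_apply, hR, ← RCLike.re_to_complex, inner_self_eq_norm_sq]

lemma trNorm_comp_le_opTr_comp_self {R U V : ℋ →L[ℂ] ℋ} (hR : ∀ x y : ℋ, ⟪R x, y⟫ = ⟪x, R y⟫)
    (hU : ∀ x, ‖U x‖ = ‖x‖) (hV : ∀ x, ‖V x‖ = ‖x‖) :
    trNorm (R.comp (U.comp (R.comp V))) ≤ opTr (R.comp R) := by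
  refine iSup_le fun n => iSup_le fun e => iSup_le fun f => iSup_le fun he => iSup_le fun hf => ?_
  set f' := V ∘ f
  have hf' : Orthonormal ℂ f' := hf.comp_linearIsometry ⟨V.toLinearMap, hV⟩
  have hterm : ∀ i, ‖⟪e i, R.comp (U.comp (R.comp V)) (f i)⟫‖ ≤
      ‖R (e i)‖ ^ 2 / 2 + ‖R (f' i)‖ ^ 2 / 2 := fun i => by
    rw [ContinuousLinearMap.comp_apply, ← hR]
    calc ‖⟪R (e i), U (R (f' i))⟫‖ ≤ ‖R (e i)‖ * ‖R (f' i)‖ := by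
          simpa only [hU] using norm_inner_le_norm (𝕜 := ℂ) (R (e i)) (U (R (f' i)))
      _ ≤ _ := by nlinarith [sq_nonneg (‖R (e i)‖ - ‖R (f' i)‖)]
  calc ∑ i, ENNReal.ofReal ‖⟪e i, R.comp (U.comp (R.comp V)) (f i)⟫‖
      ≤ ENNReal.ofReal (∑ i, ‖R (e i)‖ ^ 2 / 2 + ∑ i, ‖R (f' i)‖ ^ 2 / 2) := by
        rw [← Finset.sum_add_distrib, ENNReal.ofReal_sum_of_nonneg fun i _ => by positivity]
        gcongr with i
        exact hterm i
    _ ≤ ENNReal.ofReal (∑ i, ‖R (e i)‖ ^ 2) / 2 + ENNReal.ofReal (∑ i, ‖R (f' i)‖ ^ 2) / 2 := by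
        rw [← Finset.sum_div, ← Finset.sum_div]
        refine ENNReal.ofReal_add_le.trans_eq ?_
        simp only [ENNReal.ofReal_div_of_pos two_pos, ENNReal.ofReal_ofNat]
    _ ≤ opTr (R.comp R) / 2 + opTr (R.comp R) / 2 := by
        gcongr
        exacts [ofReal_sum_norm_sq_le_opTr_comp_self hR he,
          ofReal_sum_norm_sq_le_opTr_comp_self hR hf']
    _ = opTr (R.comp R) := ENNReal.add_halves _

lemma tsum_le_opTr {ι : Type*} {ρ : ℋ →L[ℂ] ℋ} {p : ι → ℝ≥0} {φ : ι → ℋ}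
    (hφ : Orthonormal ℂ φ) (heig : ∀ i, ρ (φ i) = (p i : ℂ) • φ i) :
    ∑' i, (p i : ℝ≥0∞) ≤ opTr ρ := by
  rw [ENNReal.tsum_eq_iSup_sum]
  refine iSup_le fun s => le_of_eq_of_le ?_ <|
    ofReal_sum_re_inner_le_opTr ρ (hφ.comp ((↑) : s → ι) Subtype.val_injective)
  have hre : ∀ i, (⟪ρ (φ i), φ i⟫).re = p i := fun i => by
    rw [heig, inner_smul_left, inner_self_eq_norm_sq_to_K, hφ.1]; simp
  simp only [Function.comp_apply, hre, Finset.sum_coe_sort s (fun i => (p i : ℝ)),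
    ENNReal.ofReal_sum_of_nonneg fun i _ => (p i).coe_nonneg, ENNReal.ofReal_coe_nnreal]

lemma hasSum_re_inner_of_eq_tsum [CompleteSpace ℋ] {ι : Type*} {ρ : ℋ →L[ℂ] ℋ}
    {p : ι → ℝ≥0} {φ : ι → ℋ} (hφ : Orthonormal ℂ φ)
    (hdec : ∀ x : ℋ, ρ x = ∑' i, (p i : ℂ) • (⟪φ i, x⟫ • φ i)) {C : ℝ≥0} (hp : ∀ i, p i ≤ C)
    (x : ℋ) : HasSum (fun i => (p i : ℝ) * ‖⟪φ i, x⟫‖ ^ 2) (⟪ρ x, x⟫).re := by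
  set c : ι → ℂ := fun i => p i * ⟪φ i, x⟫
  have hc : Summable fun i => ‖c i‖ ^ 2 := by
    refine .of_nonneg_of_le (fun i => by positivity) (fun i => ?_)
      ((hφ.inner_products_summable x).mul_left ((C : ℝ) ^ 2))
    simp only [c, norm_mul, Complex.norm_real, Real.norm_of_nonneg (p i).coe_nonneg, mul_pow]
    gcongr
    exact hp i
  have hρ : HasSum (fun i => c i • φ i) (ρ x) := by
    have hsum : Summable fun i => c i • φ i := by
      simpa using (hφ.orthogonalFamily.summable_iff_norm_sq_summable c).2 (by simpa using hc)
    simpa only [hdec x, c, smul_smul] using hsum.hasSum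
  convert (hρ.mapL (innerSL ℂ x)).mapL Complex.reCLM using 1
  · funext i
    simp only [c, innerSL_apply_apply, inner_smul_right, Complex.reCLM_apply]
    rw [← inner_conj_symm x (φ i), mul_assoc, Complex.mul_conj, ← Complex.sq_norm]
    norm_cast
  · rw [Complex.reCLM_apply, innerSL_apply_apply, ← inner_conj_symm, Complex.conj_re]

lemma opTr_le_tsum_of_eq_tsum [CompleteSpace ℋ] {ι : Type*} {ρ : ℋ →L[ℂ] ℋ}
    {p : ι → ℝ≥0} {φ : ι → ℋ} (hφ : Orthonormal ℂ φ)
    (hdec : ∀ x : ℋ, ρ x = ∑' i, (p i : ℂ) • (⟪φ i, x⟫ • φ i)) {C : ℝ≥0} (hp : ∀ i, p i ≤ C) :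
    opTr ρ ≤ ∑' i, (p i : ℝ≥0∞) := by
  refine iSup_le fun n => iSup_le fun e => iSup_le fun he => ?_
  have hsum := fun k => hasSum_re_inner_of_eq_tsum hφ hdec hp (e k)
  have hbessel : ∀ i, ∑ k, ‖⟪φ i, e k⟫‖ ^ 2 ≤ 1 := fun i => by
    simpa only [norm_inner_symm, hφ.1 i, one_pow] using
      he.sum_inner_products_le (φ i) (s := Finset.univ)
  calc ENNReal.ofReal (∑ k, (⟪ρ (e k), e k⟫).re)
      = ∑' i, ∑ k, ENNReal.ofReal ((p i : ℝ) * ‖⟪φ i, e k⟫‖ ^ 2) := by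
        rw [ENNReal.ofReal_sum_of_nonneg fun k _ => (hsum k).nonneg fun i => by positivity,
          Summable.tsum_finsetSum fun _ _ => ENNReal.summable]
        refine Finset.sum_congr rfl fun k _ => ?_
        rw [← (hsum k).tsum_eq, ENNReal.ofReal_tsum_of_nonneg (fun i => by positivity)
          (hsum k).summable]
    _ ≤ ∑' i, (p i : ℝ≥0∞) := by
        refine ENNReal.tsum_le_tsum fun i => ?_
        rw [← ENNReal.ofReal_sum_of_nonneg fun k _ => by positivity, ← Finset.mul_sum,
          ← ENNReal.ofReal_coe_nnreal]
        exact ENNReal.ofReal_le_ofReal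
          (mul_le_of_le_one_right (p i).coe_nonneg (hbessel i))

lemma apply_eq_smul_of_eq_tsum {ι : Type*} {ρ : ℋ →L[ℂ] ℋ} {p : ι → ℝ≥0} {φ : ι → ℋ}
    (hφ : Orthonormal ℂ φ) (hdec : ∀ x : ℋ, ρ x = ∑' i, (p i : ℂ) • (⟪φ i, x⟫ • φ i)) (i : ι) :
    ρ (φ i) = (p i : ℂ) • φ i := by
  rw [hdec, tsum_eq_single i fun j hj => by simp [hφ.inner_eq_zero hj]]
  simp [inner_self_eq_norm_sq_to_K, hφ.1 i]

lemma tsum_eq_opTr_of_eq_tsum [CompleteSpace ℋ] {ι : Type*} {ρ : ℋ →L[ℂ] ℋ}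
    {p : ι → ℝ≥0} {φ : ι → ℋ} (hφ : Orthonormal ℂ φ)
    (hdec : ∀ x : ℋ, ρ x = ∑' i, (p i : ℂ) • (⟪φ i, x⟫ • φ i)) (hρ : opTr ρ ≠ ⊤) :
    ∑' i, (p i : ℝ≥0∞) = opTr ρ := by
  have hle := tsum_le_opTr hφ (apply_eq_smul_of_eq_tsum hφ hdec)
  refine le_antisymm hle (opTr_le_tsum_of_eq_tsum hφ hdec (C := (opTr ρ).toNNReal) fun i => ?_)
  rw [← ENNReal.coe_le_coe, ENNReal.coe_toNNReal hρ]
  exact (ENNReal.le_tsum i).trans hle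

lemma sum_ofReal_mul_norm_inner_le_trNorm {ι : Type*} [Fintype ι] {R U V : ℋ →L[ℂ] ℋ}
    (hR : ∀ x y : ℋ, ⟪R x, y⟫ = ⟪x, R y⟫) (hU : ∀ x, ‖U x‖ = ‖x‖) (hVU : ∀ x, V (U x) = x)
    {p : ι → ℝ} (hp : ∀ i, 0 < p i) {φ : ι → ℋ} (hφ : Orthonormal ℂ φ)
    (heig : ∀ i, R (R (φ i)) = (p i : ℂ) • φ i) :
    ∑ i, ENNReal.ofReal (p i * ‖⟪φ i, U (φ i)⟫‖) ≤ trNorm (R.comp (U.comp (R.comp V))) := by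
  classical
  have hsqrt : ∀ i, ((√(p i) : ℝ) : ℂ) ≠ 0 := fun i => by
    exact_mod_cast (Real.sqrt_pos.2 (hp i)).ne'
  have hsq : ∀ i, ((√(p i) : ℝ) : ℂ) * (√(p i) : ℝ) = p i := fun i => by
    exact_mod_cast Real.mul_self_sqrt (hp i).le
  set e : ι → ℋ := fun i => ((√(p i) : ℝ) : ℂ)⁻¹ • R (φ i)
  have hRe : ∀ i, R (e i) = ((√(p i) : ℝ) : ℂ) • φ i := fun i => by
    rw [map_smul, heig, smul_smul, ← hsq, inv_mul_cancel_left₀ (hsqrt i)]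
  have he : Orthonormal ℂ e := orthonormal_iff_ite.2 fun i j => by
    rw [inner_smul_left, hR, hRe, inner_smul_right, orthonormal_iff_ite.1 hφ]
    split_ifs with hij
    · subst hij; simp [hsqrt]
    · simp
  have hval : ∀ i, ‖⟪e i, R.comp (U.comp (R.comp V)) (U (e i))⟫‖ = p i * ‖⟪φ i, U (φ i)⟫‖ :=
    fun i => by
      rw [ContinuousLinearMap.comp_apply, ContinuousLinearMap.comp_apply,
        ContinuousLinearMap.comp_apply, hVU, ← hR, hRe, map_smul, inner_smul_left,
        inner_smul_right, Complex.conj_ofReal, ← mul_assoc, hsq, norm_mul, Complex.norm_real,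
        Real.norm_of_nonneg (hp i).le]
  simp only [← hval]
  exact sum_ofReal_norm_inner_le_trNorm _ he (he.comp_linearIsometry ⟨U.toLinearMap, hU⟩)

lemma tsum_mul_ofReal_norm_inner_le_trNorm {ι : Type*} {R U V : ℋ →L[ℂ] ℋ}
    (hR : ∀ x y : ℋ, ⟪R x, y⟫ = ⟪x, R y⟫) (hU : ∀ x, ‖U x‖ = ‖x‖) (hVU : ∀ x, V (U x) = x)
    {p : ι → ℝ≥0} {φ : ι → ℋ} (hφ : Orthonormal ℂ φ)
    (heig : ∀ i, R (R (φ i)) = (p i : ℂ) • φ i) :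
    ∑' i, (p i : ℝ≥0∞) * ENNReal.ofReal ‖⟪φ i, U (φ i)⟫‖ ≤ trNorm (R.comp (U.comp (R.comp V))) := by
  classical
  rw [ENNReal.tsum_eq_iSup_sum]
  refine iSup_le fun s => ?_
  set s' := s.filter (p · ≠ 0)
  have hpos : ∀ i : s', 0 < (p i : ℝ) := fun i => by
    have := (Finset.mem_filter.1 i.2).2
    positivity
  calc ∑ i ∈ s, (p i : ℝ≥0∞) * ENNReal.ofReal ‖⟪φ i, U (φ i)⟫‖
      = ∑ i : s', ENNReal.ofReal (p i * ‖⟪φ i, U (φ i)⟫‖) := by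
        simp only [ENNReal.ofReal_mul (p _).coe_nonneg, ENNReal.ofReal_coe_nnreal]
        rw [Finset.sum_coe_sort s' fun i => (p i : ℝ≥0∞) * ENNReal.ofReal ‖⟪φ i, U (φ i)⟫‖]
        exact (Finset.sum_filter_of_ne fun i _ h => by simpa using left_ne_zero_of_mul h).symm
    _ ≤ _ := sum_ofReal_mul_norm_inner_le_trNorm hR hU hVU hpos
        (hφ.comp _ Subtype.val_injective) fun i => heig i

lemma one_le_trNorm_add_tsum_mul_ofReal_one_sub_re_inner {ι : Type*} {R U V : ℋ →L[ℂ] ℋ}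
    (hR : ∀ x y : ℋ, ⟪R x, y⟫ = ⟪x, R y⟫) (hU : ∀ x, ‖U x‖ = ‖x‖) (hVU : ∀ x, V (U x) = x)
    {p : ι → ℝ≥0} (hp : 1 ≤ ∑' i, (p i : ℝ≥0∞)) {φ : ι → ℋ} (hφ : Orthonormal ℂ φ)
    (heig : ∀ i, R (R (φ i)) = (p i : ℂ) • φ i) :
    1 ≤ trNorm (R.comp (U.comp (R.comp V))) +
      ∑' i, (p i : ℝ≥0∞) * ENNReal.ofReal (1 - (⟪φ i, U (φ i)⟫).re) := by
  have hsplit : ∀ z : ℂ, 1 ≤ ENNReal.ofReal ‖z‖ + ENNReal.ofReal (1 - z.re) := fun z => by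
    rw [← ENNReal.ofReal_one]
    exact (ENNReal.ofReal_le_ofReal (by linarith [Complex.re_le_norm z])).trans
      ENNReal.ofReal_add_le
  calc 1 ≤ ∑' i, (p i : ℝ≥0∞) := hp
    _ ≤ ∑' i, ((p i : ℝ≥0∞) * ENNReal.ofReal ‖⟪φ i, U (φ i)⟫‖ +
          (p i : ℝ≥0∞) * ENNReal.ofReal (1 - (⟪φ i, U (φ i)⟫).re)) :=
        ENNReal.tsum_le_tsum fun i => by
          rw [← mul_add]; exact le_mul_of_one_le_right' (hsplit _)
    _ ≤ _ := by
        rw [ENNReal.tsum_add]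
        gcongr
        exact tsum_mul_ofReal_norm_inner_le_trNorm hR hU hVU hφ heig

theorem statement7_general
    {ℋ : Type*} [NormedAddCommGroup ℋ] [InnerProductSpace ℂ ℋ] [CompleteSpace ℋ]
    (μ : ℋ → Measure ℝ)
    (hμtot : ∀ x : ℋ, μ x Set.univ = ENNReal.ofReal (‖x‖ ^ 2))
    (T : ℝ → ℋ →L[ℂ] ℋ)
    (hT0 : T 0 = ContinuousLinearMap.id ℂ ℋ)
    (hTadd : ∀ t s : ℝ, (T t).comp (T s) = T (t + s))
    (hTiso : ∀ (t : ℝ) (x : ℋ), ‖T t x‖ = ‖x‖)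
    (hμT : ∀ (x : ℋ) (t : ℝ), ⟪x, T t x⟫ = ∫ s, Complex.exp (-(Complex.I * t * s)) ∂(μ x))
    (α : ℝ) (hα : α ∈ Set.Ioc (0 : ℝ) 1)
    (En : ℝ) (hEn : ∃ x : ℋ, x ≠ 0 ∧ μ x {s : ℝ | |s| < En} ≠ 0)
    (ρ₀ : ℋ →L[ℂ] ℋ) (hρ₀ : IsStateOp ρ₀)
    (hρ₀E : stateEnergyLE μ (2 * α) ρ₀ (ENNReal.ofReal (En ^ (2 * α))))
    -- R = √ρ₀, the positive square root of the initial state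
    (R : ℋ →L[ℂ] ℋ) (hRpos : IsPosOp R) (hRsq : R.comp R = ρ₀)
    (t : ℝ) (ht : 0 ≤ t)
    -- θ = Bures angle between ρ(0) and ρ(t) = T_t ρ₀ T_{-t}, whose square root is T_t R T_{-t}
    (θ : ℝ)
    (hθ : θ = Real.arccos
      ((trNorm (R.comp ((T t).comp (R.comp (T (-t)))))).toReal)) :
    t ≥ ((1 - Real.cos θ) / gC α) ^ (1 / α) * (1 / En) := by
  obtain ⟨hα0, hα1⟩ := hα
  obtain ⟨p, φ, hφ, hdec, hpE⟩ := hρ₀E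
  obtain ⟨x, -, hx⟩ := hEn
  have hEn0 : 0 < En := pos_of_measure_setOf_abs_lt_ne_zero hx
  have hp : ∑' i, (p i : ℝ≥0∞) = 1 :=
    hρ₀.2 ▸ tsum_eq_opTr_of_eq_tsum hφ hdec (hρ₀.2 ▸ ENNReal.one_ne_top)
  have hRR : ∀ i, R (R (φ i)) = (p i : ℂ) • φ i := fun i => by
    rw [← apply_eq_smul_of_eq_tsum hφ hdec, ← hRsq]; rfl
  have hTinv : ∀ x, T (-t) (T t x) = x := fun x => by
    rw [← ContinuousLinearMap.comp_apply, hTadd, neg_add_cancel, hT0]; rfl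
  have hF : trNorm (R.comp ((T t).comp (R.comp (T (-t))))) ≤ 1 := by
    simpa only [hRsq, hρ₀.2] using trNorm_comp_le_opTr_comp_self hRpos.1 (hTiso t) (hTiso (-t))
  have : ∀ i, IsProbabilityMeasure (μ (φ i)) := fun i => ⟨by rw [hμtot, hφ.1 i]; norm_num⟩
  have hdisp := tsum_mul_ofReal_one_sub_re_integral_cexp_le _ p hp.le hα0.le (by linarith)
    hEn0.le hpE ht
  simp only [← hμT] at hdisp
  have hcos : 1 - Real.cos θ ≤ 2 ^ (1 - α) * (t * En) ^ α :=
    hθ ▸ one_sub_cos_arccos_toReal_le hF (by positivity) <|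
      (one_le_trNorm_add_tsum_mul_ofReal_one_sub_re_inner hRpos.1 (hTiso t) hTinv hp.ge hφ
        hRR).trans (add_le_add_right hdisp _)
  have hg := two_rpow_one_sub_le_gC hα0 hα1
  rw [ge_iff_le, mul_one_div, div_le_iff₀ hEn0]
  exact rpow_one_div_le_of_le_mul_rpow (by linarith [Real.cos_le_one θ])
    ((Real.rpow_pos_of_pos two_pos _).trans_le hg) (mul_nonneg ht hEn0.le) hα0
    (hcos.trans (by gcongr))

/-- Quantum speed limit, closed systems, mixed states.  `H` self-adjoint
(encoded by its unitary group `T` and spectral measure family `μ`), `α ∈ (0,1]`,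
`E > inf σ(|H|)`, `ρ(t) = e^{-itH} ρ₀ e^{itH}`; `ρ₀` a state with regularized-trace energy
constraint `tr(|H|^{2α}ρ₀) ≤ E^{2α}`, `R = √ρ₀` (so that `√ρ(t) = T_t R T_{-t}`), and Bures
angle `θ = arccos ‖√ρ(0) √ρ(t)‖₁ ∈ [0,π/2]`.  Then `t ≥ ((1 − cos θ)/g_α)^{1/α}·(1/E)`. -/
theorem statement7
    {ℋ : Type*} [NormedAddCommGroup ℋ] [InnerProductSpace ℂ ℋ] [CompleteSpace ℋ]
    [TopologicalSpace.SeparableSpace ℋ]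
    (H : ℋ →ₗ.[ℂ] ℋ) (hHsa : IsSelfAdjoint H)
    (μ : ℋ → Measure ℝ)
    (hμtot : ∀ x : ℋ, μ x Set.univ = ENNReal.ofReal (‖x‖ ^ 2))
    (hHdom : ∀ x : ℋ, x ∈ H.domain ↔ specMoment μ 2 x ≠ ∞)
    (hHval : ∀ x : H.domain, ⟪(x : ℋ), H x⟫ = ∫ s, (s : ℂ) ∂(μ x))
    (T : ℝ → ℋ →L[ℂ] ℋ)
    (hT0 : T 0 = ContinuousLinearMap.id ℂ ℋ)
    (hTadd : ∀ t s : ℝ, (T t).comp (T s) = T (t + s))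
    (hTiso : ∀ (t : ℝ) (x : ℋ), ‖T t x‖ = ‖x‖)
    (hμT : ∀ (x : ℋ) (t : ℝ), ⟪x, T t x⟫ = ∫ s, Complex.exp (-(Complex.I * t * s)) ∂(μ x))
    (α : ℝ) (hα : α ∈ Set.Ioc (0 : ℝ) 1)
    (En : ℝ) (hEn : ∃ x : ℋ, x ≠ 0 ∧ μ x {s : ℝ | |s| < En} ≠ 0)
    (ρ₀ : ℋ →L[ℂ] ℋ) (hρ₀ : IsStateOp ρ₀)
    (hρ₀E : stateEnergyLE μ (2 * α) ρ₀ (ENNReal.ofReal (En ^ (2 * α))))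
    -- R = √ρ₀, the positive square root of the initial state
    (R : ℋ →L[ℂ] ℋ) (hRpos : IsPosOp R) (hRsq : R.comp R = ρ₀)
    (t : ℝ) (ht : 0 ≤ t)
    -- θ = Bures angle between ρ(0) and ρ(t) = T_t ρ₀ T_{-t}, whose square root is T_t R T_{-t}
    (θ : ℝ)
    (hθ : θ = Real.arccos
      ((trNorm (R.comp ((T t).comp (R.comp (T (-t)))))).toReal)) :
    t ≥ ((1 - Real.cos θ) / gC α) ^ (1 / α) * (1 / En) :=
  statement7_general μ hμtot T hT0 hTadd hTiso hμT α hα En hEn ρ₀ hρ₀ hρ₀E R hRpos hRsq t ht θ hθ
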